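/- arXiv:2401.11299 — 2 statements merged into one kernel-verified Lean document; each statement's English description precedes it below -/
import Mathlib

section
/- For a homogeneous multivector H ∈ ⋀^pX, the following are equivalent, and each is equivalent to H being simple: (i) (F⌟H)∧H = 0 for all F ∈ ⋀^{p−1}X; (ii) (H⌟G)⌟H = 0 for all G ∈ ⋀^{p+1}X; (iii) ⟨F⌟H, H⌟G⟩ = 0 for all F ∈ ⋀^{p−1}X and G ∈ ⋀^{p+1}X. -/
/-!
Setup: `X` is a finite-dimensional real inner product space, `⋀X` its exterior
algebra.  We hypothesize a bilinear form `innE` on the exterior algebra which makes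
the wedges of any orthonormal basis of `X` (over increasing index sets) orthonormal
— this characterizes the inner product of the paper — and a bilinear left
contraction `lcontr` adjoint to the wedge product: `⟨M⌟N, L⟩ = ⟨N, M∧L⟩`.
-/

noncomputable section

open ExteriorAlgebra

/-- The wedge product `v_{i₁} ∧ ⋯ ∧ v_{i_p}` of the vectors `v i`, `i ∈ s`,
taken in increasing order of the indices. -/
def wedgeOf {X : Type*} [AddCommGroup X] [Module ℝ X] {n : ℕ}
    (v : Fin n → X) (s : Finset (Fin n)) : ExteriorAlgebra ℝ X :=
  ((s.sort (· ≤ ·)).map fun i => ι ℝ (v i)).prod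

/-- The inner space `isp M = {v : v ∧ M = 0}`. -/
def isp {X : Type*} [AddCommGroup X] [Module ℝ X]
    (M : ExteriorAlgebra ℝ X) : Submodule ℝ X where
  carrier := {x | ι ℝ x * M = 0}
  add_mem' := by
    intro a b ha hb
    simp only [Set.mem_setOf_eq, map_add, add_mul] at *
    rw [ha, hb, add_zero]
  zero_mem' := by simp
  smul_mem' := by
    intro c x hx
    simp only [Set.mem_setOf_eq, map_smul, smul_mul_assoc] at *
    rw [hx, smul_zero]

/-- The space `{v : v ⌟ M = 0}`, whose orthogonal complement is the outer space. -/
def ospKer {X : Type*} [NormedAddCommGroup X] [InnerProductSpace ℝ X]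
    (lcontr : ExteriorAlgebra ℝ X →ₗ[ℝ] ExteriorAlgebra ℝ X →ₗ[ℝ] ExteriorAlgebra ℝ X)
    (M : ExteriorAlgebra ℝ X) : Submodule ℝ X where
  carrier := {x | lcontr (ι ℝ x) M = 0}
  add_mem' := by
    intro a b ha hb
    simp only [Set.mem_setOf_eq, map_add, LinearMap.add_apply] at *
    rw [ha, hb, add_zero]
  zero_mem' := by simp
  smul_mem' := by
    intro c x hx
    simp only [Set.mem_setOf_eq, map_smul, LinearMap.smul_apply] at *
    rw [hx, smul_zero]

/-- The outer space `osp M = {v : v ⌟ M = 0}ᗮ`. -/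
def osp {X : Type*} [NormedAddCommGroup X] [InnerProductSpace ℝ X]
    (lcontr : ExteriorAlgebra ℝ X →ₗ[ℝ] ExteriorAlgebra ℝ X →ₗ[ℝ] ExteriorAlgebra ℝ X)
    (M : ExteriorAlgebra ℝ X) : Submodule ℝ X :=
  (ospKer lcontr M)ᗮ

/-- `innE` is the inner product of `⋀X`: for every orthonormal basis of `X`, the
wedges of basis vectors over increasing index sets form an orthonormal family. -/
def InnerOK {X : Type*} [NormedAddCommGroup X] [InnerProductSpace ℝ X]
    (innE : ExteriorAlgebra ℝ X →ₗ[ℝ] ExteriorAlgebra ℝ X →ₗ[ℝ] ℝ) : Prop :=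
  ∀ (m : ℕ) (w : OrthonormalBasis (Fin m) ℝ X) (s t : Finset (Fin m)),
    innE (wedgeOf (⇑w) s) (wedgeOf (⇑w) t) = if s = t then 1 else 0

/-- `lcontr` is the left contraction: `⟨M ⌟ N, L⟩ = ⟨N, M ∧ L⟩`. -/
def ContrOK {X : Type*} [NormedAddCommGroup X] [InnerProductSpace ℝ X]
    (innE : ExteriorAlgebra ℝ X →ₗ[ℝ] ExteriorAlgebra ℝ X →ₗ[ℝ] ℝ)
    (lcontr : ExteriorAlgebra ℝ X →ₗ[ℝ] ExteriorAlgebra ℝ X →ₗ[ℝ] ExteriorAlgebra ℝ X) :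
    Prop :=
  ∀ M N L : ExteriorAlgebra ℝ X, innE (lcontr M N) L = innE N (M * L)


/-- A blade (simple multivector): a scalar multiple of an exterior product
`v₁ ∧ ⋯ ∧ v_p` of vectors of `X` (`p ≥ 0`; scalars and `0` are blades). -/
def IsBlade {X : Type*} [AddCommGroup X] [Module ℝ X]
    (M : ExteriorAlgebra ℝ X) : Prop :=
  ∃ (c : ℝ) (p : ℕ) (f : Fin p → X), M = c • (List.ofFn fun i => ι ℝ (f i)).prod


/-!
With respect to the inner product, the wedges `b_S` of an orthonormal basis `b` of `X` form an
orthonormal basis of `⋀X`, so a multivector is determined by its coefficients `⟨M, b_S⟩`.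
Through the adjunction `⟨M⌟N, L⟩ = ⟨N, M∧L⟩` and the graded commutativity
`u ∧ M = (-1)^q M ∧ u` of a vector `u`, conditions (ii) and (iii) both amount to
`(F⌟H) ∧ H = 0` for all `F ∈ ⋀^{p-1}X`, i.e. to (i).

For (i) ⟹ simple, choose `b` adapted to the space `W` of vectors of the form `F⌟H`, say
`W = span {b_i | i ∈ A}`. A coefficient `⟨H, b_S⟩` with `j ∈ S ∖ A` is, up to sign, the pairing
of `b_{S∖j}⌟H ∈ W` with `b_j ⊥ W`; one with `S ⊊ A` vanishes because `b_i ∧ H = 0` for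
`i ∈ A ∖ S`. Hence `H` is a multiple of `b_A`. Conversely, if `H = c b_A` with `A` indexing
a basis of the span of its factors, every vector `F⌟H` lies in `span {b_i | i ∈ A}` and so
wedges `H` to zero.
-/

open scoped InnerProductSpace
open Submodule

namespace ExteriorAlgebra

variable {R M : Type*} [CommRing R] [AddCommGroup M] [Module R M]

theorem ι_mul_ι_anticomm (x y : M) : ι R x * ι R y = -(ι R y * ι R x) :=
  eq_neg_of_add_eq_zero_left (ι_add_mul_swap x y)

theorem prod_map_ι_eq_smul_of_perm {l₁ l₂ : List M} (h : l₁.Perm l₂) :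
    ∃ ε : R, ε ^ 2 = 1 ∧ (l₁.map (ι R)).prod = ε • (l₂.map (ι R)).prod := by
  induction h with
  | nil => exact ⟨1, one_pow 2, by simp⟩
  | cons x _ ih =>
    obtain ⟨ε, hε, h⟩ := ih
    exact ⟨ε, hε, by simp [h]⟩
  | swap x y l =>
    refine ⟨-1, by simp, ?_⟩
    simp [← mul_assoc, ι_mul_ι_anticomm y x]
  | trans _ _ ih₁ ih₂ =>
    obtain ⟨ε₁, hε₁, h₁⟩ := ih₁
    obtain ⟨ε₂, hε₂, h₂⟩ := ih₂
    exact ⟨ε₁ * ε₂, by rw [mul_pow, hε₁, hε₂, one_mul], by rw [h₁, h₂, smul_smul]⟩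

theorem ι_mul_ιMulti_eq_neg_one_pow_smul (x : M) {q : ℕ} (f : Fin q → M) :
    ι R x * ιMulti R q f = (-1 : R) ^ q • (ιMulti R q f * ι R x) := by
  induction q with
  | zero => simp
  | succ q ih =>
    rw [ιMulti_succ_apply, ← mul_assoc, ι_mul_ι_anticomm, neg_mul, mul_assoc, ih, pow_succ]
    simp [mul_assoc]

theorem ι_mul_eq_neg_one_pow_smul {q : ℕ} (x : M) {N : ExteriorAlgebra R M}
    (hN : N ∈ ⋀[R]^q M) : ι R x * N = (-1 : R) ^ q • (N * ι R x) := by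
  rw [← ιMulti_span_fixedDegree] at hN
  induction hN using Submodule.span_induction with
  | mem _ h => obtain ⟨f, rfl⟩ := h; exact ι_mul_ιMulti_eq_neg_one_pow_smul x f
  | zero => simp
  | add _ _ _ _ h₁ h₂ => rw [mul_add, add_mul, h₁, h₂, smul_add]
  | smul r _ _ h => rw [mul_smul_comm, smul_mul_assoc, h, smul_comm]

theorem mul_ι_eq_neg_one_pow_smul {q : ℕ} (x : M) {N : ExteriorAlgebra R M}
    (hN : N ∈ ⋀[R]^q M) : N * ι R x = (-1 : R) ^ q • (ι R x * N) := by
  rw [ι_mul_eq_neg_one_pow_smul x hN, smul_smul, ← pow_add, Even.neg_one_pow ⟨q, rfl⟩, one_smul]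

theorem exists_ι_eq_of_mem_one {u : ExteriorAlgebra R M} (hu : u ∈ ⋀[R]^1 M) :
    ∃ x, ι R x = u := by
  rwa [exteriorPower, pow_one] at hu

theorem exists_algebraMap_eq_of_mem_zero {u : ExteriorAlgebra R M}
    (hu : u ∈ ⋀[R]^0 M) : ∃ r, algebraMap R _ r = u := by
  rwa [exteriorPower, pow_zero, Submodule.mem_one] at hu

end ExteriorAlgebra

section Wedge

variable {X : Type*} [AddCommGroup X] [Module ℝ X] {n : ℕ} (v : Fin n → X)

theorem wedgeOf_eq_ιMulti (s : Finset (Fin n)) :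
    wedgeOf v s = ιMulti ℝ _ (fun k => v ((s.sort (· ≤ ·)).get k)) := by
  rw [ιMulti_apply, wedgeOf]
  conv_lhs => rw [← List.ofFn_get (s.sort (· ≤ ·)), List.map_ofFn]
  rfl

theorem wedgeOf_empty : wedgeOf v ∅ = 1 := by simp [wedgeOf]

theorem wedgeOf_singleton (i : Fin n) : wedgeOf v {i} = ι ℝ (v i) := by simp [wedgeOf]

theorem wedgeOf_mem_exteriorPower (s : Finset (Fin n)) : wedgeOf v s ∈ ⋀[ℝ]^s.card X := by
  rw [wedgeOf_eq_ιMulti, ← s.length_sort (· ≤ ·)]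
  exact ιMulti_range ℝ _ ⟨_, rfl⟩

theorem isBlade_smul_wedgeOf (c : ℝ) (s : Finset (Fin n)) : IsBlade (c • wedgeOf v s) :=
  ⟨c, _, fun k => v ((s.sort (· ≤ ·)).get k), by rw [wedgeOf_eq_ιMulti, ιMulti_apply]⟩

variable {v}

theorem ι_mul_wedgeOf_of_mem {i : Fin n} {s : Finset (Fin n)} (h : i ∈ s) :
    ι ℝ (v i) * wedgeOf v s = 0 := by
  obtain ⟨k, rfl⟩ := List.mem_iff_get.mp ((s.mem_sort (· ≤ ·)).mpr h)
  rw [wedgeOf_eq_ιMulti, ιMulti_apply]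
  exact ι_mul_prod_list _ k

theorem ι_mul_wedgeOf_of_notMem {i : Fin n} {s : Finset (Fin n)} (h : i ∉ s) :
    ∃ ε : ℝ, ε ^ 2 = 1 ∧ ι ℝ (v i) * wedgeOf v s = ε • wedgeOf v (insert i s) := by
  have hperm : List.Perm (((insert i s).sort (· ≤ ·)).map v) ((i :: s.sort (· ≤ ·)).map v) :=
    (((insert i s).sort_perm_toList _).trans
      ((Finset.toList_insert h).trans ((s.sort_perm_toList _).symm.cons i))).map v
  obtain ⟨ε, hε, heq⟩ := prod_map_ι_eq_smul_of_perm (R := ℝ) hperm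
  refine ⟨ε, hε, ?_⟩
  simp only [wedgeOf, List.map_map, Function.comp_def] at heq ⊢
  rw [heq, smul_smul, ← sq, hε, one_smul]
  simp

theorem ι_mul_mem_span_wedgeOf {A : Set (Fin n)} {𝒮 𝒯 : Set (Finset (Fin n))}
    (h𝒯 : ∀ s ∈ 𝒮, ∀ i ∈ A, i ∉ s → insert i s ∈ 𝒯) {x : X} (hx : x ∈ span ℝ (v '' A))
    {z : ExteriorAlgebra ℝ X} (hz : z ∈ span ℝ (wedgeOf v '' 𝒮)) :
    ι ℝ x * z ∈ span ℝ (wedgeOf v '' 𝒯) := by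
  have hιx : ι ℝ x ∈ span ℝ (ι ℝ '' (v '' A)) := by
    rw [span_image]
    exact mem_map_of_mem hx
  have hmul := mul_mem_mul hιx hz
  rw [span_mul_span] at hmul
  refine span_le.mpr ?_ hmul
  rintro _ ⟨_, ⟨_, ⟨i, hi, rfl⟩, rfl⟩, _, ⟨s, hs, rfl⟩, rfl⟩
  dsimp only
  by_cases his : i ∈ s
  · rw [ι_mul_wedgeOf_of_mem his]
    exact zero_mem _
  · obtain ⟨ε, -, heq⟩ := ι_mul_wedgeOf_of_notMem (v := v) his
    rw [heq]
    exact smul_mem _ _ (subset_span ⟨_, h𝒯 s hs i hi his, rfl⟩)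

theorem ιMulti_mem_span_wedgeOf {A : Finset (Fin n)} {k : ℕ} {f : Fin k → X}
    (hf : ∀ j, f j ∈ span ℝ (v '' A)) :
    ιMulti ℝ k f ∈ span ℝ (wedgeOf v '' {s | s ⊆ A ∧ s.card = k}) := by
  induction k with
  | zero =>
    rw [ιMulti_zero_apply, ← wedgeOf_empty v]
    exact subset_span ⟨∅, by simp, rfl⟩
  | succ k ih =>
    rw [ιMulti_succ_apply]
    refine ι_mul_mem_span_wedgeOf (fun s hs i hi his => ?_) (hf 0) (ih fun j => hf _)
    exact ⟨Finset.insert_subset hi hs.1, by rw [Finset.card_insert_of_notMem his, hs.2]⟩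

variable (v)

theorem exteriorPower_eq_span_wedgeOf (hv : span ℝ (Set.range v) = ⊤) (k : ℕ) :
    ⋀[ℝ]^k X = span ℝ (wedgeOf v '' {s | s.card = k}) := by
  refine le_antisymm ?_ (span_le.mpr ?_)
  · rw [← ιMulti_span_fixedDegree, span_le]
    rintro _ ⟨f, rfl⟩
    simpa using ιMulti_mem_span_wedgeOf (v := v) (A := Finset.univ) (f := f) (by simp [hv])
  · rintro _ ⟨s, rfl, rfl⟩
    exact wedgeOf_mem_exteriorPower v s

theorem span_range_wedgeOf_eq_top (hv : span ℝ (Set.range v) = ⊤) :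
    span ℝ (Set.range (wedgeOf v)) = ⊤ := by
  rw [eq_top_iff, ← ExteriorAlgebra.ιMulti_span, span_le]
  rintro _ ⟨⟨k, f⟩, rfl⟩
  exact span_mono (Set.image_subset_range _ _)
    (ιMulti_mem_span_wedgeOf (A := Finset.univ) (by simp [hv]))

end Wedge

theorem OrthonormalBasis.span_range_wedgeOf_eq_top {X : Type*} [NormedAddCommGroup X]
    [InnerProductSpace ℝ X] {m : ℕ} (b : OrthonormalBasis (Fin m) ℝ X) :
    span ℝ (Set.range (wedgeOf ⇑b)) = ⊤ :=
  _root_.span_range_wedgeOf_eq_top _ (by simpa using b.toBasis.span_eq)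

namespace InnerOK

variable {X : Type*} [NormedAddCommGroup X] [InnerProductSpace ℝ X]
  {innE : ExteriorAlgebra ℝ X →ₗ[ℝ] ExteriorAlgebra ℝ X →ₗ[ℝ] ℝ} (hinn : InnerOK innE)
  {m : ℕ} (b : OrthonormalBasis (Fin m) ℝ X)
include hinn

theorem sum_innE_wedgeOf_smul (M : ExteriorAlgebra ℝ X) :
    ∑ s, innE M (wedgeOf b s) • wedgeOf b s = M := by
  have hid : ∑ s, (innE.flip (wedgeOf b s)).smulRight (wedgeOf b s) = LinearMap.id :=
    LinearMap.ext_on_range b.span_range_wedgeOf_eq_top fun t => by simp [hinn _ b]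
  simpa using LinearMap.congr_fun hid M

theorem eq_zero_of_innE_wedgeOf_eq_zero {M : ExteriorAlgebra ℝ X}
    (h : ∀ s, innE M (wedgeOf b s) = 0) : M = 0 := by
  rw [← hinn.sum_innE_wedgeOf_smul b M]
  simp [h]

theorem innE_comm [FiniteDimensional ℝ X] (M N : ExteriorAlgebra ℝ X) :
    innE M N = innE N M := by
  conv_lhs => rw [← hinn.sum_innE_wedgeOf_smul (stdOrthonormalBasis ℝ X) N]
  conv_rhs => rw [← hinn.sum_innE_wedgeOf_smul (stdOrthonormalBasis ℝ X) M]
  simp [mul_comm]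

theorem innE_wedgeOf_eq_zero_of_mem_span {𝒮 : Set (Finset (Fin m))} {M : ExteriorAlgebra ℝ X}
    (hM : M ∈ span ℝ (wedgeOf b '' 𝒮)) {t : Finset (Fin m)} (ht : t ∉ 𝒮) :
    innE M (wedgeOf b t) = 0 := by
  have : span ℝ (wedgeOf b '' 𝒮) ≤ LinearMap.ker (innE.flip (wedgeOf b t)) := by
    refine span_le.mpr ?_
    rintro _ ⟨s, hs, rfl⟩
    simp [hinn _ b, ne_of_mem_of_not_mem hs ht]
  exact this hM

theorem innE_eq_zero_of_mem_span_of_disjoint {𝒮 𝒯 : Set (Finset (Fin m))}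
    {M N : ExteriorAlgebra ℝ X} (hM : M ∈ span ℝ (wedgeOf b '' 𝒮))
    (hN : N ∈ span ℝ (wedgeOf b '' 𝒯)) (h : Disjoint 𝒮 𝒯) : innE M N = 0 := by
  have : span ℝ (wedgeOf b '' 𝒯) ≤ LinearMap.ker (innE M) := by
    refine span_le.mpr ?_
    rintro _ ⟨t, ht, rfl⟩
    exact hinn.innE_wedgeOf_eq_zero_of_mem_span b hM (h.notMem_of_mem_right ht)
  exact this hN

theorem mem_exteriorPower_of_innE_wedgeOf_eq_zero {k : ℕ} {M : ExteriorAlgebra ℝ X}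
    (h : ∀ t : Finset (Fin m), t.card ≠ k → innE M (wedgeOf b t) = 0) : M ∈ ⋀[ℝ]^k X := by
  rw [← hinn.sum_innE_wedgeOf_smul b M]
  refine sum_mem fun t _ => ?_
  by_cases ht : t.card = k
  · exact smul_mem _ _ (ht ▸ wedgeOf_mem_exteriorPower _ t)
  · simp [h t ht]

theorem innE_ι_mul_ι_mul_wedgeOf {i : Fin m} {s : Finset (Fin m)} (hs : i ∉ s)
    (M : ExteriorAlgebra ℝ X) :
    innE (ι ℝ (b i) * M) (ι ℝ (b i) * wedgeOf b s) = innE M (wedgeOf b s) := by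
  have key : (innE.flip (ι ℝ (b i) * wedgeOf b s)) ∘ₗ LinearMap.mulLeft ℝ (ι ℝ (b i)) =
      innE.flip (wedgeOf b s) := by
    refine LinearMap.ext_on_range b.span_range_wedgeOf_eq_top fun t => ?_
    simp only [LinearMap.comp_apply, LinearMap.flip_apply, LinearMap.mulLeft_apply]
    obtain ⟨ε, hε, hεs⟩ := ι_mul_wedgeOf_of_notMem (v := ⇑b) hs
    by_cases hts : t = s
    · subst hts
      simp [hεs, hinn _ b, ← sq, hε]
    by_cases hit : i ∈ t
    · simp [ι_mul_wedgeOf_of_mem hit, hinn _ b, hts]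
    · obtain ⟨ε', -, hεt⟩ := ι_mul_wedgeOf_of_notMem (v := ⇑b) hit
      have hne : insert i t ≠ insert i s := fun h =>
        hts (by rw [← Finset.erase_insert hit, h, Finset.erase_insert hs])
      simp [hεs, hεt, hinn _ b, hne, hts]
  exact LinearMap.congr_fun key M

theorem innE_wedgeOf_eq_zero_of_ι_mul_eq_zero {i : Fin m} {M : ExteriorAlgebra ℝ X}
    (hM : ι ℝ (b i) * M = 0) {s : Finset (Fin m)} (hs : i ∉ s) : innE M (wedgeOf b s) = 0 := by
  rw [← hinn.innE_ι_mul_ι_mul_wedgeOf b hs, hM, map_zero, LinearMap.zero_apply]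

omit b
variable [FiniteDimensional ℝ X]

theorem innE_eq_zero_of_mem_exteriorPower {a c : ℕ} {M N : ExteriorAlgebra ℝ X}
    (hM : M ∈ ⋀[ℝ]^a X) (hN : N ∈ ⋀[ℝ]^c X) (hac : a ≠ c) : innE M N = 0 := by
  set b := stdOrthonormalBasis ℝ X
  have hb : span ℝ (Set.range b) = ⊤ := by simpa using b.toBasis.span_eq
  rw [exteriorPower_eq_span_wedgeOf _ hb] at hM hN
  exact hinn.innE_eq_zero_of_mem_span_of_disjoint b hM hN
    (Set.disjoint_left.mpr fun s h₁ h₂ => hac (h₁.symm.trans h₂))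

theorem eq_zero_of_forall_innE_eq_zero {k : ℕ} {M : ExteriorAlgebra ℝ X} (hM : M ∈ ⋀[ℝ]^k X)
    (h : ∀ N ∈ ⋀[ℝ]^k X, innE M N = 0) : M = 0 := by
  refine hinn.eq_zero_of_innE_wedgeOf_eq_zero (stdOrthonormalBasis ℝ X) fun t => ?_
  by_cases ht : t.card = k
  · exact h _ (ht ▸ wedgeOf_mem_exteriorPower _ t)
  · exact hinn.innE_eq_zero_of_mem_exteriorPower hM (wedgeOf_mem_exteriorPower _ t) (Ne.symm ht)

theorem innE_ι_ι (x y : X) : innE (ι ℝ x) (ι ℝ y) = ⟪x, y⟫_ℝ := by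
  set b := stdOrthonormalBasis ℝ X
  have key : innE.compl₁₂ (ι ℝ) (ι ℝ) = innerₗ X := by
    refine LinearMap.ext_basis b.toBasis b.toBasis fun i j => ?_
    have := hinn _ b {i} {j}
    simp only [wedgeOf_singleton] at this
    simp [this, orthonormal_iff_ite.mp b.orthonormal]
  exact LinearMap.congr_fun₂ key x y

end InnerOK

section OrthonormalBasis

variable {𝕜 E : Type*} [RCLike 𝕜] [NormedAddCommGroup E] [InnerProductSpace 𝕜 E]

theorem OrthonormalBasis.mem_span_image_iff {ι : Type*} [Fintype ι] (b : OrthonormalBasis ι 𝕜 E)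
    (A : Set ι) {x : E} : x ∈ span 𝕜 (b '' A) ↔ ∀ j ∉ A, ⟪b j, x⟫_𝕜 = 0 := by
  constructor
  · intro hx j hj
    have : span 𝕜 (b '' A) ≤ (𝕜 ∙ b j)ᗮ := by
      refine span_le.mpr ?_
      rintro _ ⟨i, hi, rfl⟩
      exact Submodule.mem_orthogonal_singleton_iff_inner_right.mpr
        (b.orthonormal.2 (ne_of_mem_of_not_mem hi hj).symm)
    exact Submodule.mem_orthogonal_singleton_iff_inner_right.mp (this hx)
  · intro h
    rw [← b.sum_repr' x]
    refine sum_mem fun j _ => ?_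
    by_cases hj : j ∈ A
    · exact smul_mem _ _ (subset_span ⟨j, hj, rfl⟩)
    · simp [h j hj]

theorem exists_orthonormalBasis_span_image_eq [FiniteDimensional 𝕜 E] (W : Submodule 𝕜 E) :
    ∃ (m : ℕ) (b : OrthonormalBasis (Fin m) 𝕜 E) (A : Finset (Fin m)),
      span 𝕜 (b '' A) = W := by
  classical
  set e := stdOrthonormalBasis 𝕜 W
  have he : Orthonormal 𝕜 (W.subtypeₗᵢ ∘ e) := e.orthonormal.comp_linearIsometry _
  obtain ⟨u, b, hsub, hb⟩ := ((orthonormal_subtype_range he.linearIndependent.injective).2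
    he).exists_orthonormalBasis_extension
  set b' := b.reindex u.equivFin
  refine ⟨_, b', Finset.univ.filter (b' · ∈ W), le_antisymm ?_ fun x hx => ?_⟩
  · refine span_le.mpr ?_
    rintro _ ⟨i, hi, rfl⟩
    simpa using hi
  · rw [← Submodule.coe_mk x hx, ← e.sum_repr' ⟨x, hx⟩, Submodule.coe_sum]
    refine sum_mem fun k _ => ?_
    have hk : (e k : E) ∈ u := hsub ⟨k, rfl⟩
    have hbk : b' (u.equivFin ⟨_, hk⟩) = e k := by simp [b', hb]
    rw [Submodule.coe_smul, ← hbk]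
    exact smul_mem _ _ (subset_span ⟨_, by simp [hbk], rfl⟩)

end OrthonormalBasis

namespace ContrOK

variable {X : Type*} [NormedAddCommGroup X] [InnerProductSpace ℝ X] [FiniteDimensional ℝ X]
  {innE : ExteriorAlgebra ℝ X →ₗ[ℝ] ExteriorAlgebra ℝ X →ₗ[ℝ] ℝ}
  {lcontr : ExteriorAlgebra ℝ X →ₗ[ℝ] ExteriorAlgebra ℝ X →ₗ[ℝ] ExteriorAlgebra ℝ X}
  (hc : ContrOK innE lcontr) (hinn : InnerOK innE)
include hc hinn

theorem innE_lcontr_wedgeOf_eq_zero {a c : ℕ} {M N : ExteriorAlgebra ℝ X} (hM : M ∈ ⋀[ℝ]^a X)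
    (hN : N ∈ ⋀[ℝ]^c X) {m : ℕ} (b : OrthonormalBasis (Fin m) ℝ X) {t : Finset (Fin m)}
    (ht : a + t.card ≠ c) : innE (lcontr M N) (wedgeOf b t) = 0 := by
  rw [hc]
  exact hinn.innE_eq_zero_of_mem_exteriorPower hN
    (SetLike.GradedMul.mul_mem hM (wedgeOf_mem_exteriorPower _ t)) (Ne.symm ht)

theorem lcontr_mem_exteriorPower {a c k : ℕ} {M N : ExteriorAlgebra ℝ X} (hM : M ∈ ⋀[ℝ]^a X)
    (hN : N ∈ ⋀[ℝ]^c X) (h : a + k = c) : lcontr M N ∈ ⋀[ℝ]^k X :=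
  hinn.mem_exteriorPower_of_innE_wedgeOf_eq_zero (stdOrthonormalBasis ℝ X) fun _ ht =>
    hc.innE_lcontr_wedgeOf_eq_zero hinn hM hN _ (by omega)

theorem lcontr_eq_zero_of_lt {a c : ℕ} {M N : ExteriorAlgebra ℝ X} (hM : M ∈ ⋀[ℝ]^a X)
    (hN : N ∈ ⋀[ℝ]^c X) (h : c < a) : lcontr M N = 0 :=
  hinn.eq_zero_of_innE_wedgeOf_eq_zero (stdOrthonormalBasis ℝ X) fun _ =>
    hc.innE_lcontr_wedgeOf_eq_zero hinn hM hN _ (by omega)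

theorem innE_lcontr_lcontr_eq {q : ℕ} {F H G : ExteriorAlgebra ℝ X} (hF : F ∈ ⋀[ℝ]^q X)
    (hH : H ∈ ⋀[ℝ]^(q + 1) X) (hG : G ∈ ⋀[ℝ]^(q + 1 + 1) X) :
    innE (lcontr (lcontr H G) H) F = (-1) ^ q * innE (lcontr F H) (lcontr H G) := by
  obtain ⟨x, hx⟩ := exists_ι_eq_of_mem_one (hc.lcontr_mem_exteriorPower hinn hH hG rfl)
  rw [hc, ← hx, ι_mul_eq_neg_one_pow_smul x hF, map_smul, smul_eq_mul, ← hc]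

theorem innE_lcontr_mul_eq {q : ℕ} {F H : ExteriorAlgebra ℝ X} (hF : F ∈ ⋀[ℝ]^q X)
    (hH : H ∈ ⋀[ℝ]^(q + 1) X) (G : ExteriorAlgebra ℝ X) :
    innE G (lcontr F H * H) = (-1) ^ (q + 1) * innE (lcontr F H) (lcontr H G) := by
  obtain ⟨x, hx⟩ := exists_ι_eq_of_mem_one (hc.lcontr_mem_exteriorPower hinn hF hH rfl)
  rw [← hx, ι_mul_eq_neg_one_pow_smul x hH, map_smul, smul_eq_mul, ← hc,
    hinn.innE_comm (lcontr H G)]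

theorem innE_wedgeOf_eq_zero_of_lcontr_erase_eq {m : ℕ} (b : OrthonormalBasis (Fin m) ℝ X)
    {H : ExteriorAlgebra ℝ X} {S : Finset (Fin m)} {j : Fin m} (hj : j ∈ S) {x : X}
    (hx : lcontr (wedgeOf b (S.erase j)) H = ι ℝ x) (hxj : ⟪x, b j⟫_ℝ = 0) :
    innE H (wedgeOf b S) = 0 := by
  obtain ⟨ε, hε, heq⟩ := ι_mul_wedgeOf_of_notMem (v := ⇑b) (S.notMem_erase j)
  rw [Finset.insert_erase hj] at heq
  have hε0 : ε ≠ 0 := by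
    rintro rfl
    norm_num at hε
  have : ε * innE H (wedgeOf b S) = 0 := by
    rw [← smul_eq_mul, ← map_smul, ← heq,
      ι_mul_eq_neg_one_pow_smul _ (wedgeOf_mem_exteriorPower _ _), map_smul, ← hc, hx,
      hinn.innE_ι_ι, hxj, smul_zero]
  exact (mul_eq_zero.mp this).resolve_left hε0

theorem isBlade_of_forall_lcontr_mul_eq_zero {q : ℕ} {H : ExteriorAlgebra ℝ X}
    (hH : H ∈ ⋀[ℝ]^(q + 1) X) (h : ∀ F ∈ ⋀[ℝ]^q X, lcontr F H * H = 0) : IsBlade H := by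
  obtain ⟨m, b, A, hA⟩ :=
    exists_orthonormalBasis_span_image_eq (((⋀[ℝ]^q X).map (lcontr.flip H)).comap (ι ℝ))
  suffices hS : ∀ S ≠ A, innE H (wedgeOf b S) = 0 by
    rw [← hinn.sum_innE_wedgeOf_smul b H,
      Finset.sum_eq_single A (fun S _ hSA => by rw [hS S hSA, zero_smul]) (by simp)]
    exact isBlade_smul_wedgeOf _ _ _
  intro S hSA
  by_cases hSA' : S ⊆ A
  · obtain ⟨i, hiA, hiS⟩ := Finset.exists_of_ssubset (hSA'.ssubset_of_ne hSA)
    have hiW : b i ∈ span ℝ (b '' A) := subset_span ⟨i, hiA, rfl⟩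
    rw [hA] at hiW
    obtain ⟨F, hF, hFi⟩ := hiW
    refine hinn.innE_wedgeOf_eq_zero_of_ι_mul_eq_zero b ?_ hiS
    rw [← hFi]
    exact h F hF
  obtain ⟨j, hjS, hjA⟩ := Finset.not_subset.mp hSA'
  by_cases hS : S.card = q + 1
  swap
  · exact hinn.innE_eq_zero_of_mem_exteriorPower hH (wedgeOf_mem_exteriorPower _ S) (Ne.symm hS)
  have hF : wedgeOf b (S.erase j) ∈ ⋀[ℝ]^q X := by
    simpa [Finset.card_erase_of_mem hjS, hS] using wedgeOf_mem_exteriorPower b (S.erase j)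
  obtain ⟨x, hx⟩ := exists_ι_eq_of_mem_one (hc.lcontr_mem_exteriorPower hinn hF hH rfl)
  have hxA : x ∈ span ℝ (b '' A) := hA ▸ ⟨_, hF, hx.symm⟩
  refine hc.innE_wedgeOf_eq_zero_of_lcontr_erase_eq hinn b hjS hx.symm ?_
  rw [real_inner_comm]
  exact (b.mem_span_image_iff _).mp hxA j hjA

theorem lcontr_mul_eq_zero_of_isBlade {q : ℕ} {F H : ExteriorAlgebra ℝ X} (hF : F ∈ ⋀[ℝ]^q X)
    (hH : H ∈ ⋀[ℝ]^(q + 1) X) (hb : IsBlade H) : lcontr F H * H = 0 := by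
  obtain ⟨c, k, f, rfl⟩ := hb
  rw [← ιMulti_apply] at hH ⊢
  by_cases hf : LinearIndependent ℝ f
  swap
  · rw [AlternatingMap.map_linearDependent _ f hf, smul_zero, map_zero, zero_mul]
  obtain ⟨m, b, A, hA⟩ := exists_orthonormalBasis_span_image_eq (span ℝ (Set.range f))
  have hAk : A.card = k := by
    have h := finrank_span_eq_card
      (b.orthonormal.linearIndependent.comp ((↑) : A → Fin m) Subtype.val_injective)
    have hr : Set.range (b ∘ ((↑) : A → Fin m)) = b '' A := by
      rw [Set.range_comp, Subtype.range_coe]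
    rw [hr, hA, finrank_span_eq_card hf] at h
    simpa using h.symm
  have hspan : c • ιMulti ℝ k f ∈
      span ℝ (wedgeOf b '' {s | s ⊆ A ∧ s.card = A.card}) := by
    rw [hAk]
    exact smul_mem _ _
      (ιMulti_mem_span_wedgeOf fun i => hA ▸ subset_span (Set.mem_range_self i))
  obtain ⟨x, hx⟩ := exists_ι_eq_of_mem_one (hc.lcontr_mem_exteriorPower hinn hF hH rfl)
  have hxA : x ∈ span ℝ (b '' A) := (b.mem_span_image_iff _).mpr fun j hj => by
    have hjF : ι ℝ (b j) * F ∈ span ℝ (wedgeOf b '' {t | j ∈ t}) :=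
      ι_mul_mem_span_wedgeOf (A := {j}) (𝒮 := Set.univ) (fun s _ i hi his => by simp_all)
        (subset_span ⟨j, rfl, rfl⟩)
        (by rw [Set.image_univ, b.span_range_wedgeOf_eq_top]; trivial)
    rw [real_inner_comm, ← hinn.innE_ι_ι, hx, hc, mul_ι_eq_neg_one_pow_smul _ hF, map_smul,
      hinn.innE_eq_zero_of_mem_span_of_disjoint b hspan hjF
        (Set.disjoint_left.mpr fun s hs hjs => hj (hs.1 hjs)), smul_zero]
  rw [← hx]
  have hzero := ι_mul_mem_span_wedgeOf (𝒯 := ∅) (fun s hs i hi his => ?_) hxA hspan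
  · simpa using hzero
  · exact his ((Finset.eq_of_subset_of_card_le hs.1 hs.2.ge).symm ▸ hi)

theorem forall_lcontr_mul_eq_zero_iff_isBlade {p : ℕ} {H : ExteriorAlgebra ℝ X}
    (hH : H ∈ ⋀[ℝ]^p X) :
    (∀ q : ℕ, q + 1 = p → ∀ F ∈ ⋀[ℝ]^q X, lcontr F H * H = 0) ↔ IsBlade H := by
  cases p with
  | zero =>
    obtain ⟨r, rfl⟩ := exists_algebraMap_eq_of_mem_zero hH
    exact iff_of_true (fun q hq => absurd hq q.succ_ne_zero)
      ⟨r, 0, Fin.elim0, by simp [Algebra.algebraMap_eq_smul_one]⟩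
  | succ q =>
    simp only [Nat.add_right_cancel_iff, forall_eq]
    exact ⟨hc.isBlade_of_forall_lcontr_mul_eq_zero hinn hH,
      fun hb _ hF => hc.lcontr_mul_eq_zero_of_isBlade hinn hF hH hb⟩

theorem forall_innE_lcontr_lcontr_eq_zero_iff {p : ℕ} {H : ExteriorAlgebra ℝ X}
    (hH : H ∈ ⋀[ℝ]^p X) :
    (∀ q : ℕ, q + 1 = p → ∀ F ∈ ⋀[ℝ]^q X, ∀ G ∈ ⋀[ℝ]^(p + 1) X,
      innE (lcontr F H) (lcontr H G) = 0) ↔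
    (∀ q : ℕ, q + 1 = p → ∀ F ∈ ⋀[ℝ]^q X, lcontr F H * H = 0) := by
  refine forall_congr' fun q => forall_congr' fun hq => ?_
  subst hq
  refine forall₂_congr fun F hF => ?_
  have hmul : lcontr F H * H ∈ ⋀[ℝ]^(q + 1 + 1) X := by
    simpa [add_comm] using
      SetLike.GradedMul.mul_mem (hc.lcontr_mem_exteriorPower hinn hF hH rfl) hH
  constructor
  · intro h
    refine hinn.eq_zero_of_forall_innE_eq_zero hmul fun G hG => ?_
    rw [hinn.innE_comm, hc.innE_lcontr_mul_eq hinn hF hH, h G hG, mul_zero]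
  · intro h G _
    have := hc.innE_lcontr_mul_eq hinn hF hH G
    rwa [h, map_zero, eq_comm, neg_one_pow_mul_eq_zero_iff] at this

theorem forall_lcontr_lcontr_eq_zero_iff {p : ℕ} {H : ExteriorAlgebra ℝ X}
    (hH : H ∈ ⋀[ℝ]^p X) :
    (∀ G ∈ ⋀[ℝ]^(p + 1) X, lcontr (lcontr H G) H = 0) ↔
    (∀ q : ℕ, q + 1 = p → ∀ F ∈ ⋀[ℝ]^q X, ∀ G ∈ ⋀[ℝ]^(p + 1) X,
      innE (lcontr F H) (lcontr H G) = 0) := by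
  cases p with
  | zero =>
    refine iff_of_true (fun G hG => ?_) (fun q hq => absurd hq q.succ_ne_zero)
    exact hc.lcontr_eq_zero_of_lt hinn (hc.lcontr_mem_exteriorPower hinn hH hG rfl) hH one_pos
  | succ q =>
    simp only [Nat.add_right_cancel_iff, forall_eq]
    constructor
    · intro h F hF G hG
      have := hc.innE_lcontr_lcontr_eq hinn hF hH hG
      rwa [h G hG, map_zero, LinearMap.zero_apply, eq_comm, neg_one_pow_mul_eq_zero_iff] at this
    · intro h G hG
      have hHG := hc.lcontr_mem_exteriorPower hinn hH hG rfl
      refine hinn.eq_zero_of_forall_innE_eq_zero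
        (hc.lcontr_mem_exteriorPower hinn hHG hH (add_comm 1 q)) fun F hF => ?_
      rw [hc.innE_lcontr_lcontr_eq hinn hF hH hG, h F hF G hG, mul_zero]

end ContrOK

/-- `F ∈ ⋀^{p-1}X` is encoded as `F ∈ ⋀^q X` with `q + 1 = p`, avoiding the truncated `p - 1`:
for `p = 0` the conditions quantifying over `F` are vacuous. -/
theorem simplicity_criteria {X : Type*} [NormedAddCommGroup X]
    [InnerProductSpace ℝ X] [FiniteDimensional ℝ X]
    (innE : ExteriorAlgebra ℝ X →ₗ[ℝ] ExteriorAlgebra ℝ X →ₗ[ℝ] ℝ)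
    (lcontr : ExteriorAlgebra ℝ X →ₗ[ℝ] ExteriorAlgebra ℝ X →ₗ[ℝ] ExteriorAlgebra ℝ X)
    (hinn : InnerOK innE) (hc : ContrOK innE lcontr)
    (p : ℕ) (H : ExteriorAlgebra ℝ X) (hH : H ∈ ⋀[ℝ]^p X) :
    -- (i)
    ((∀ q : ℕ, q + 1 = p → ∀ F ∈ ⋀[ℝ]^q X, lcontr F H * H = 0) ↔ IsBlade H) ∧
    -- (ii)
    ((∀ G ∈ ⋀[ℝ]^(p + 1) X, lcontr (lcontr H G) H = 0) ↔ IsBlade H) ∧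
    -- (iii)
    ((∀ q : ℕ, q + 1 = p → ∀ F ∈ ⋀[ℝ]^q X, ∀ G ∈ ⋀[ℝ]^(p + 1) X,
        innE (lcontr F H) (lcontr H G) = 0) ↔ IsBlade H) := by
  have hi := hc.forall_lcontr_mul_eq_zero_iff_isBlade hinn hH
  have hiii := (hc.forall_innE_lcontr_lcontr_eq_zero_iff hinn hH).trans hi
  exact ⟨hi, (hc.forall_lcontr_lcontr_eq_zero_iff hinn hH).trans hiii, hiii⟩

end
end

section
/- Let 0 ≠ M ∈ ⋀X, with inner grade i = dim isp(M) and outer grade o = dim osp(M). Then the homogeneous components of M of grades i, i+1, o−1 and o are simple (each is a blade, possibly zero). -/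
/-!
Setup: `X` is a finite-dimensional real inner product space, `⋀X` its exterior
algebra.  We hypothesize a bilinear form `innE` on the exterior algebra which makes
the wedges of any orthonormal basis of `X` (over increasing index sets) orthonormal
— this characterizes the inner product of the paper — and a bilinear left
contraction `lcontr` adjoint to the wedge product: `⟨M⌟N, L⟩ = ⟨N, M∧L⟩`.
-/

noncomputable section

open ExteriorAlgebra

/-- Projection onto the grade-`p` homogeneous component of the exterior algebra. -/
def gradeProj {X : Type*} [AddCommGroup X] [Module ℝ X] (p : ℕ) :
    ExteriorAlgebra ℝ X →ₗ[ℝ] ExteriorAlgebra ℝ X :=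
  GradedAlgebra.proj (fun i : ℕ => ⋀[ℝ]^i X) p

/-- The bottom grade: least `p` with `⟨M⟩_p ≠ 0`. -/
noncomputable def bgrade {X : Type*} [AddCommGroup X] [Module ℝ X]
    (M : ExteriorAlgebra ℝ X) : ℕ :=
  sInf {p | gradeProj p M ≠ 0}

/-- The top grade: greatest `p` with `⟨M⟩_p ≠ 0`. -/
noncomputable def tgrade {X : Type*} [AddCommGroup X] [Module ℝ X]
    (M : ExteriorAlgebra ℝ X) : ℕ :=
  sSup {p | gradeProj p M ≠ 0}

/-!
Expand `M` in the basis of wedges `b_s` induced by an orthonormal basis `b` of `X` chosen so that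
the `b_j`, `j ∈ σ`, lie in a given subspace. If `b_j ∧ M = 0` for `j ∈ σ`, every `b_s` occurring
in `M` has `σ ⊆ s`; so the grade-`#σ` part of `M` is a multiple of `b_σ`, and its grade-`(#σ + 1)`
part is `x ∧ b_σ` for a single vector `x`. Dually, if `b_j ⌟ M = 0` for `j ∉ τ`, every `b_s`
occurring has `s ⊆ τ`, so the grade-`#τ` part is a multiple of `b_τ`. For the grade-`(#τ - 1)`
part `w`, the map `x ↦ x ∧ w` sends the span of the `b_j`, `j ∈ τ`, into the line `ℝ b_τ`; hence
`dim isp w ≥ #τ - 1`, and the first case applies to `w`.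
-/

open Finset Module

lemma card_le_finrank_ker_add_one {K V E ι : Type*} [Field K] [AddCommGroup V] [Module K V]
    [FiniteDimensional K V] [AddCommGroup E] [Module K E] [Fintype ι] {v : ι → V}
    (hv : LinearIndependent K v) (T : V →ₗ[K] E) (z : E) (hT : ∀ i, T (v i) ∈ K ∙ z) :
    Fintype.card ι ≤ finrank K (LinearMap.ker T) + 1 := by
  set W := Submodule.span K (Set.range v)
  have hW : W ≤ (K ∙ z).comap T := Submodule.span_le.mpr (Set.range_subset_iff.mpr hT)
  have hrange : finrank K (LinearMap.range (T.domRestrict W)) ≤ 1 := by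
    have : LinearMap.range (T.domRestrict W) ≤ K ∙ z := by
      rintro _ ⟨x, rfl⟩
      exact hW x.2
    exact (Submodule.finrank_mono this).trans ((finrank_span_le_card {z}).trans (by simp))
  have hker : finrank K (LinearMap.ker (T.domRestrict W)) ≤ finrank K (LinearMap.ker T) := by
    rw [← Submodule.finrank_map_subtype_eq]
    exact Submodule.finrank_mono fun x ⟨y, hy, hyx⟩ => hyx ▸ hy
  have := LinearMap.finrank_range_add_finrank_ker (T.domRestrict W)
  rw [finrank_span_eq_card hv] at this
  omega

lemma exists_orthonormalBasis_mem_submodule {X : Type*} [NormedAddCommGroup X]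
    [InnerProductSpace ℝ X] [FiniteDimensional ℝ X] (Y : Submodule ℝ X) :
    ∃ (b : OrthonormalBasis (Fin (finrank ℝ X)) ℝ X) (σ : Finset (Fin (finrank ℝ X))),
      #σ = finrank ℝ Y ∧ ∀ j ∈ σ, b j ∈ Y := by
  let u := stdOrthonormalBasis ℝ Y
  let e : Fin (finrank ℝ Y) ↪ Fin (finrank ℝ X) := Fin.castLEEmb Y.finrank_le
  let v : Fin (finrank ℝ X) → X := Function.extend e (fun i => (u i : X)) 0
  have hv : ∀ i, v (e i) = u i := e.injective.extend_apply _ _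
  have hrestrict : (Set.range e).restrict v =
      (fun i => (u i : X)) ∘ (Equiv.ofInjective e e.injective).symm := by
    funext ⟨_, i, rfl⟩
    rw [Function.comp_apply, Equiv.ofInjective_symm_apply]
    exact hv i
  have hon : Orthonormal ℝ ((Set.range e).restrict v) := by
    rw [hrestrict]
    exact (u.orthonormal.comp_linearIsometry Y.subtypeₗᵢ).comp _ (Equiv.injective _)
  obtain ⟨b, hb⟩ := hon.exists_orthonormalBasis_extension_of_card_eq (by simp)
  refine ⟨b, univ.map e, by simp, ?_⟩
  simp only [mem_map, mem_univ, true_and]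
  rintro _ ⟨i, rfl⟩
  rw [hb _ ⟨i, rfl⟩, hv]
  exact (u i).2

namespace ExteriorAlgebra

open Set.powersetCard

section Basis

variable {R M I : Type*} [CommRing R] [AddCommGroup M] [Module R M] [LinearOrder I]
  (b : Module.Basis I R M)

lemma basis_singleton (k : I) : b.ExteriorAlgebra {k} = ι R (b k) := by
  rw [basis_apply_ofCard b (card_singleton k)]
  simp [ofFinEmbEquiv_symm_apply, ofCard]

lemma basis_mem_exteriorPower (s : Finset I) : b.ExteriorAlgebra s ∈ ⋀[R]^#s M := by
  rw [basis_apply]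
  exact ιMulti_range R _ ⟨_, rfl⟩

lemma ι_mul_basis_of_mem {k : I} {s : Finset I} (hk : k ∈ s) :
    ι R (b k) * b.ExteriorAlgebra s = 0 := by
  rw [← basis_singleton]
  exact basis_mul_of_not_disjoint b (ofCard (card_singleton k)) (ofCard rfl)
    (by simpa [ofCard] using hk)

lemma ι_mul_basis_of_notMem {k : I} {s : Finset I} (hk : k ∉ s) :
    ∃ ε : ℤˣ, ι R (b k) * b.ExteriorAlgebra s = ε • b.ExteriorAlgebra (insert k s) := by
  have hd : Disjoint (ofCard (card_singleton k)).val (ofCard (rfl : #s = #s)).val := by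
    simpa [ofCard] using hk
  have hins : (Set.powersetCard.disjUnion hd).val = insert k s := by
    simp [Set.powersetCard.disjUnion, ofCard]
  rw [← basis_singleton, ← hins]
  exact ⟨_, basis_mul_of_disjoint b _ _ hd⟩

lemma basis_repr_ι_mul_insert {k : I} {s : Finset I} (hk : k ∉ s) :
    ∃ ε : ℤˣ, ∀ x : ExteriorAlgebra R M,
      b.ExteriorAlgebra.repr (ι R (b k) * x) (insert k s) = ε • b.ExteriorAlgebra.repr x s := by
  obtain ⟨ε, hε⟩ := ι_mul_basis_of_notMem b hk
  refine ⟨ε, fun x => LinearMap.congr_fun (?_ : (b.ExteriorAlgebra.coord (insert k s)).comp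
    (LinearMap.mulLeft R (ι R (b k))) = ε • b.ExteriorAlgebra.coord s) x⟩
  refine b.ExteriorAlgebra.ext fun t => ?_
  by_cases hts : t = s
  · subst hts
    simp [hε]
  by_cases hkt : k ∈ t
  · simp [ι_mul_basis_of_mem b hkt, hts]
  · have hins : insert k t ≠ insert k s := fun h =>
      hts (by simpa [erase_insert hkt, erase_insert hk] using congrArg (·.erase k) h)
    obtain ⟨ε', hε'⟩ := ι_mul_basis_of_notMem b hkt
    simp [hε', hts, hins]

lemma basis_repr_eq_zero_of_ι_mul_eq_zero {k : I} {x : ExteriorAlgebra R M}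
    (hx : ι R (b k) * x = 0) {s : Finset I} (hk : k ∉ s) : b.ExteriorAlgebra.repr x s = 0 := by
  obtain ⟨ε, hε⟩ := basis_repr_ι_mul_insert b hk
  simpa [hx, smul_eq_zero_iff_eq] using (hε x).symm

end Basis

end ExteriorAlgebra

section Grading

variable {X I : Type*} [AddCommGroup X] [Module ℝ X]

lemma gradeProj_of_mem {p : ℕ} {w : ExteriorAlgebra ℝ X} (hw : w ∈ ⋀[ℝ]^p X) :
    gradeProj p w = w := by
  rw [gradeProj, GradedAlgebra.proj_apply]
  exact DirectSum.decompose_of_mem_same _ hw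

lemma gradeProj_mem (p : ℕ) (M : ExteriorAlgebra ℝ X) : gradeProj p M ∈ ⋀[ℝ]^p X := by
  rw [gradeProj, GradedAlgebra.proj_apply]
  exact SetLike.coe_mem _

lemma wedgeOf_eq_basis_exteriorAlgebra {n : ℕ} (b : Module.Basis (Fin n) ℝ X)
    (s : Finset (Fin n)) : wedgeOf b s = b.ExteriorAlgebra s := by
  rw [basis_apply]
  change _ = ιMulti ℝ #s (b ∘ s.orderEmbOfFin rfl)
  rw [ιMulti_apply, List.ofFn_eq_map, wedgeOf, ← s.listMap_orderEmbOfFin_finRange rfl,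
    List.map_map]
  rfl

lemma isp_eq_ker (M : ExteriorAlgebra ℝ X) :
    isp M = LinearMap.ker (LinearMap.mulRight ℝ M ∘ₗ ι ℝ) :=
  Submodule.ext fun _ => Iff.rfl

variable [LinearOrder I] (b : Module.Basis I ℝ X)

lemma gradeProj_basis (p : ℕ) (s : Finset I) :
    gradeProj p (b.ExteriorAlgebra s) = if #s = p then b.ExteriorAlgebra s else 0 := by
  rw [gradeProj, GradedAlgebra.proj_apply]
  split_ifs with h
  · exact DirectSum.decompose_of_mem_same _ (h ▸ basis_mem_exteriorPower b s)
  · exact DirectSum.decompose_of_mem_ne _ (basis_mem_exteriorPower b s) h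

lemma basis_repr_gradeProj (p : ℕ) (M : ExteriorAlgebra ℝ X) (s : Finset I) :
    b.ExteriorAlgebra.repr (gradeProj p M) s =
      if #s = p then b.ExteriorAlgebra.repr M s else 0 := by
  have key : b.ExteriorAlgebra.coord s ∘ₗ gradeProj p =
      if #s = p then b.ExteriorAlgebra.coord s else 0 := by
    refine b.ExteriorAlgebra.ext fun t => ?_
    by_cases hts : t = s
    · subst hts
      split_ifs <;> simp [gradeProj_basis, *]
    · rw [LinearMap.comp_apply, gradeProj_basis]
      split_ifs <;> simp [hts]
  have := LinearMap.congr_fun key M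
  split_ifs at this ⊢ <;> simpa using this

lemma gradeProj_eq_sum [Fintype I] (p : ℕ) (M : ExteriorAlgebra ℝ X) :
    gradeProj p M = ∑ s with #s = p, b.ExteriorAlgebra.repr M s • b.ExteriorAlgebra s := by
  conv_lhs => rw [← b.ExteriorAlgebra.sum_repr (gradeProj p M)]
  rw [sum_filter]
  refine sum_congr rfl fun s _ => ?_
  rw [basis_repr_gradeProj, ite_smul, zero_smul]

end Grading

section Blade

variable {X I : Type*} [AddCommGroup X] [Module ℝ X]

lemma isBlade_iff_exists_ιMulti {M : ExteriorAlgebra ℝ X} :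
    IsBlade M ↔ ∃ (c : ℝ) (p : ℕ) (f : Fin p → X), M = c • ιMulti ℝ p f := by
  simp [IsBlade, ιMulti_apply]

lemma IsBlade.smul {M : ExteriorAlgebra ℝ X} (h : IsBlade M) (c : ℝ) : IsBlade (c • M) := by
  obtain ⟨c', p, f, rfl⟩ := isBlade_iff_exists_ιMulti.mp h
  exact isBlade_iff_exists_ιMulti.mpr ⟨c * c', p, f, smul_smul c c' _⟩

lemma IsBlade.ι_mul {M : ExteriorAlgebra ℝ X} (h : IsBlade M) (x : X) : IsBlade (ι ℝ x * M) := by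
  obtain ⟨c, p, f, rfl⟩ := isBlade_iff_exists_ιMulti.mp h
  refine isBlade_iff_exists_ιMulti.mpr ⟨c, p + 1, Fin.cons x f, ?_⟩
  rw [ιMulti_succ_apply, mul_smul_comm]
  rfl

lemma isBlade_ιMulti (p : ℕ) (f : Fin p → X) : IsBlade (ιMulti ℝ p f) :=
  isBlade_iff_exists_ιMulti.mpr ⟨1, p, f, (one_smul ℝ _).symm⟩

variable [LinearOrder I] (b : Module.Basis I ℝ X)

lemma isBlade_basis (s : Finset I) : IsBlade (b.ExteriorAlgebra s) := by
  rw [basis_apply]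
  exact isBlade_ιMulti _ _

lemma isBlade_gradeProj_of_basis_repr_eq_zero {M : ExteriorAlgebra ℝ X} {p : ℕ} (τ : Finset I)
    (h : ∀ s, #s = p → s ≠ τ → b.ExteriorAlgebra.repr M s = 0) : IsBlade (gradeProj p M) := by
  have : gradeProj p M = b.ExteriorAlgebra.repr (gradeProj p M) τ • b.ExteriorAlgebra τ := by
    refine b.ExteriorAlgebra.ext_elem fun s => ?_
    by_cases hs : s = τ
    · simp [hs]
    · rw [basis_repr_gradeProj]
      split_ifs with hsp
      · simp [h s hsp hs, Ne.symm hs]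
      · simp [Ne.symm hs]
  rw [this]
  exact (isBlade_basis b τ).smul _

end Blade

section InnerSpace

variable {X I : Type*} [AddCommGroup X] [Module ℝ X] [LinearOrder I] (b : Module.Basis I ℝ X)
  {M : ExteriorAlgebra ℝ X} {σ : Finset I}

lemma isBlade_gradeProj_card_of_ι_mul_eq_zero (hσ : ∀ j ∈ σ, ι ℝ (b j) * M = 0) :
    IsBlade (gradeProj #σ M) := by
  refine isBlade_gradeProj_of_basis_repr_eq_zero b σ fun s hs hne => ?_
  obtain ⟨j, hjσ, hjs⟩ := not_subset.mp fun h => hne (eq_of_subset_of_card_le h hs.le).symm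
  exact basis_repr_eq_zero_of_ι_mul_eq_zero b (hσ j hjσ) hjs

lemma isBlade_gradeProj_card_add_one_of_ι_mul_eq_zero [Fintype I]
    (hσ : ∀ j ∈ σ, ι ℝ (b j) * M = 0) : IsBlade (gradeProj (#σ + 1) M) := by
  set B := b.ExteriorAlgebra
  set c := B.repr M
  choose! ε hε using fun k (hk : k ∉ σ) => ι_mul_basis_of_notMem b hk
  -- only the `b_s` with `σ ⊆ s` occur in `M`; in grade `#σ + 1` these are the `b_{insert k σ}`
  have hsum : gradeProj (#σ + 1) M = ∑ k ∈ σᶜ, c (insert k σ) • B (insert k σ) := by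
    rw [gradeProj_eq_sum b, ← sum_image (f := fun s => c s • B s) (insert_inj_on' σ)]
    refine (sum_subset (fun s hs => ?_) fun s hs hns => ?_).symm
    · obtain ⟨k, hk, rfl⟩ := mem_image.mp hs
      simp [card_insert_of_notMem (mem_compl.mp hk)]
    · obtain ⟨j, hjσ, hjs⟩ : ∃ j ∈ σ, j ∉ s := not_subset.mp fun hσs => hns <| by
        obtain ⟨k, hk, rfl⟩ := exists_eq_insert_iff.mpr ⟨hσs, (mem_filter.mp hs).2.symm⟩
        exact mem_image_of_mem _ (mem_compl.mpr hk)
      rw [basis_repr_eq_zero_of_ι_mul_eq_zero b (hσ j hjσ) hjs, zero_smul]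
  have hterm : ∀ k ∈ σᶜ, c (insert k σ) • B (insert k σ) =
      ι ℝ ((((ε k : ℤ) : ℝ) * c (insert k σ)) • b k) * B σ := by
    intro k hk
    have hεε : ((ε k : ℤ) : ℝ) * (ε k : ℤ) = 1 := by
      rw [← Int.cast_mul, ← Units.val_mul, Int.units_mul_self, Units.val_one, Int.cast_one]
    rw [map_smul, smul_mul_assoc, hε k (mem_compl.mp hk), Units.smul_def,
      ← Int.cast_smul_eq_zsmul ℝ, smul_smul]
    congr 1
    linear_combination (-c (insert k σ)) * hεε
  rw [hsum, sum_congr rfl hterm, ← sum_mul, ← map_sum]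
  exact (isBlade_basis b σ).ι_mul _

end InnerSpace

section OuterSpace

variable {X I : Type*} [AddCommGroup X] [Module ℝ X] [LinearOrder I] (b : Module.Basis I ℝ X)
  {M : ExteriorAlgebra ℝ X} {τ : Finset I}

lemma isBlade_gradeProj_card_of_basis_repr_eq_zero_of_not_subset
    (hτ : ∀ s, ¬s ⊆ τ → b.ExteriorAlgebra.repr M s = 0) : IsBlade (gradeProj #τ M) :=
  isBlade_gradeProj_of_basis_repr_eq_zero b τ fun s hs hne =>
    hτ s fun h => hne (eq_of_subset_of_card_le h hs.ge)

lemma ι_mul_gradeProj_mem_span [Fintype I] (hτ : ∀ s, ¬s ⊆ τ → b.ExteriorAlgebra.repr M s = 0)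
    {q : ℕ} (hq : q + 1 = #τ) {k : I} (hk : k ∈ τ) :
    ι ℝ (b k) * gradeProj q M ∈ ℝ ∙ b.ExteriorAlgebra τ := by
  rw [gradeProj_eq_sum b, mul_sum]
  refine Submodule.sum_mem _ fun s hs => ?_
  rw [mul_smul_comm]
  by_cases hsτ : s ⊆ τ
  · by_cases hks : k ∈ s
    · simp [ι_mul_basis_of_mem b hks]
    obtain ⟨ε, hε⟩ := ι_mul_basis_of_notMem b hks
    have hins : insert k s = τ := eq_of_subset_of_card_le (insert_subset hk hsτ)
      (by rw [card_insert_of_notMem hks, (mem_filter.mp hs).2, hq])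
    rw [hε, hins]
    exact Submodule.smul_mem _ _
      (Submodule.smul_of_tower_mem _ _ (Submodule.mem_span_singleton_self _))
  · simp [hτ s hsτ]

end OuterSpace

section InnerProduct

variable {X : Type*} [NormedAddCommGroup X] [InnerProductSpace ℝ X]
  {innE : ExteriorAlgebra ℝ X →ₗ[ℝ] ExteriorAlgebra ℝ X →ₗ[ℝ] ℝ}

lemma InnerOK.basis_repr_eq (hinn : InnerOK innE) {n : ℕ} (b : OrthonormalBasis (Fin n) ℝ X)
    (M : ExteriorAlgebra ℝ X) (t : Finset (Fin n)) :
    b.toBasis.ExteriorAlgebra.repr M t = innE M (b.toBasis.ExteriorAlgebra t) := by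
  refine LinearMap.congr_fun (?_ : b.toBasis.ExteriorAlgebra.coord t =
    innE.flip (b.toBasis.ExteriorAlgebra t)) M
  refine b.toBasis.ExteriorAlgebra.ext fun s => ?_
  rw [Module.Basis.coord_apply, Module.Basis.repr_self, LinearMap.flip_apply,
    ← wedgeOf_eq_basis_exteriorAlgebra, ← wedgeOf_eq_basis_exteriorAlgebra, b.coe_toBasis,
    hinn n b, Finsupp.single_apply]

lemma ContrOK.basis_repr_eq_zero
    {lcontr : ExteriorAlgebra ℝ X →ₗ[ℝ] ExteriorAlgebra ℝ X →ₗ[ℝ] ExteriorAlgebra ℝ X}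
    (hc : ContrOK innE lcontr) (hinn : InnerOK innE) {n : ℕ} (b : OrthonormalBasis (Fin n) ℝ X)
    {M : ExteriorAlgebra ℝ X} {k : Fin n} (hk : lcontr (ι ℝ (b k)) M = 0) {s : Finset (Fin n)}
    (hks : k ∈ s) : b.toBasis.ExteriorAlgebra.repr M s = 0 := by
  obtain ⟨ε, hε⟩ := ι_mul_basis_of_notMem b.toBasis (notMem_erase k s)
  rw [insert_erase hks, b.coe_toBasis] at hε
  have h := hc (ι ℝ (b k)) M (b.toBasis.ExteriorAlgebra (s.erase k))
  rw [hk, map_zero, LinearMap.zero_apply, hε, Units.smul_def, map_zsmul,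
    ← hinn.basis_repr_eq] at h
  simpa using h.symm

variable [FiniteDimensional ℝ X]

theorem isBlade_gradeProj_of_le_finrank_isp {M : ExteriorAlgebra ℝ X} {p : ℕ}
    (hp : p ≤ finrank ℝ (isp M)) : IsBlade (gradeProj p M) ∧ IsBlade (gradeProj (p + 1) M) := by
  obtain ⟨b, σ, hσ, hσY⟩ := exists_orthonormalBasis_mem_submodule (isp M)
  obtain ⟨τ, hτσ, rfl⟩ := exists_subset_card_eq (hσ ▸ hp : p ≤ #σ)
  have hτ : ∀ j ∈ τ, ι ℝ (b.toBasis j) * M = 0 := fun j hj => by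
    rw [b.coe_toBasis]
    exact hσY j (hτσ hj)
  exact ⟨isBlade_gradeProj_card_of_ι_mul_eq_zero _ hτ,
    isBlade_gradeProj_card_add_one_of_ι_mul_eq_zero _ hτ⟩

lemma le_finrank_isp_gradeProj {I : Type*} [LinearOrder I] [Fintype I] (b : Module.Basis I ℝ X)
    {M : ExteriorAlgebra ℝ X} {τ : Finset I}
    (hτ : ∀ s, ¬s ⊆ τ → b.ExteriorAlgebra.repr M s = 0) {q : ℕ} (hq : q + 1 = #τ) :
    q ≤ finrank ℝ (isp (gradeProj q M)) := by
  have := card_le_finrank_ker_add_one (b.linearIndependent.comp _ Subtype.val_injective)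
    (LinearMap.mulRight ℝ (gradeProj q M) ∘ₗ ι ℝ) (b.ExteriorAlgebra τ)
    fun k : τ => ι_mul_gradeProj_mem_span b hτ hq k.2
  rw [Fintype.card_coe, ← isp_eq_ker] at this
  omega

theorem isBlade_gradeProj_finrank_osp (hinn : InnerOK innE)
    {lcontr : ExteriorAlgebra ℝ X →ₗ[ℝ] ExteriorAlgebra ℝ X →ₗ[ℝ] ExteriorAlgebra ℝ X}
    (hc : ContrOK innE lcontr) (M : ExteriorAlgebra ℝ X) :
    (∀ q : ℕ, q + 1 = finrank ℝ (osp lcontr M) → IsBlade (gradeProj q M)) ∧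
      IsBlade (gradeProj (finrank ℝ (osp lcontr M)) M) := by
  obtain ⟨b, σ, hσ, hσY⟩ := exists_orthonormalBasis_mem_submodule (ospKer lcontr M)
  have hτ : ∀ s, ¬s ⊆ σᶜ → b.toBasis.ExteriorAlgebra.repr M s = 0 := fun s hs => by
    obtain ⟨j, hjs, hjσ⟩ := not_subset.mp hs
    exact hc.basis_repr_eq_zero hinn b (hσY j (by simpa using hjσ)) hjs
  have hcard : #σᶜ = finrank ℝ (osp lcontr M) := by
    have := (ospKer lcontr M).finrank_add_finrank_orthogonal
    rw [card_compl, Fintype.card_fin, hσ, osp]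
    omega
  rw [← hcard]
  refine ⟨fun q hq => ?_, isBlade_gradeProj_card_of_basis_repr_eq_zero_of_not_subset _ hτ⟩
  have := (isBlade_gradeProj_of_le_finrank_isp (le_finrank_isp_gradeProj _ hτ hq)).1
  rwa [gradeProj_of_mem (gradeProj_mem q M)] at this

end InnerProduct

theorem extreme_components_simple_general {X : Type*} [NormedAddCommGroup X]
    [InnerProductSpace ℝ X] [FiniteDimensional ℝ X]
    (innE : ExteriorAlgebra ℝ X →ₗ[ℝ] ExteriorAlgebra ℝ X →ₗ[ℝ] ℝ)
    (lcontr : ExteriorAlgebra ℝ X →ₗ[ℝ] ExteriorAlgebra ℝ X →ₗ[ℝ] ExteriorAlgebra ℝ X)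
    (hinn : InnerOK innE) (hc : ContrOK innE lcontr)
    (M : ExteriorAlgebra ℝ X) :
    IsBlade (gradeProj (Module.finrank ℝ (isp M)) M) ∧
    IsBlade (gradeProj (Module.finrank ℝ (isp M) + 1) M) ∧
    (∀ q : ℕ, q + 1 = Module.finrank ℝ (osp lcontr M) → IsBlade (gradeProj q M)) ∧
    IsBlade (gradeProj (Module.finrank ℝ (osp lcontr M)) M) := by
  obtain ⟨hi, hi₁⟩ := isBlade_gradeProj_of_le_finrank_isp (le_refl (finrank ℝ (isp M)))
  exact ⟨hi, hi₁, isBlade_gradeProj_finrank_osp hinn hc M⟩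

/-- The homogeneous components of `M` of grades
`i = dim isp M`, `i + 1`, `o − 1` and `o = dim osp M` are simple. -/
theorem extreme_components_simple {X : Type*} [NormedAddCommGroup X]
    [InnerProductSpace ℝ X] [FiniteDimensional ℝ X]
    (innE : ExteriorAlgebra ℝ X →ₗ[ℝ] ExteriorAlgebra ℝ X →ₗ[ℝ] ℝ)
    (lcontr : ExteriorAlgebra ℝ X →ₗ[ℝ] ExteriorAlgebra ℝ X →ₗ[ℝ] ExteriorAlgebra ℝ X)
    (hinn : InnerOK innE) (hc : ContrOK innE lcontr)
    (M : ExteriorAlgebra ℝ X) (hM0 : M ≠ 0) :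
    IsBlade (gradeProj (Module.finrank ℝ (isp M)) M) ∧
    IsBlade (gradeProj (Module.finrank ℝ (isp M) + 1) M) ∧
    (∀ q : ℕ, q + 1 = Module.finrank ℝ (osp lcontr M) → IsBlade (gradeProj q M)) ∧
    IsBlade (gradeProj (Module.finrank ℝ (osp lcontr M)) M) :=
  extreme_components_simple_general innE lcontr hinn hc M

end
end
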